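/- Let D- be a canonical negative Boolean automaton double-cycle with both cycle sizes n and m even, n,m ≥ 2 (f_c(x) = (¬x^ℓ_{n-1}) ∧ (¬x^r_{m-1}), other automata copy their predecessor). Then the configuration ((10)^{n/2}, 1^m) is reachable from (0^n, 0^m) by a sequence of at most (n-1)(n+m-2) asynchronous single-automaton updates. -/

import Mathlib

/-!
The left cell `n - 1` is never updated, so it stays `0` and the centre just negates the last
right cell. One round — update the left cells `n - 2, …, 1` in this order (a shift), then the
centre, then the right cells `1, …, m - 1` in this order (a flood) — costs `n + m - 2` updates
and turns the configuration in which left cell `i < n - 1` holds the parity of `k - i` and the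
whole right cycle holds the parity of `k` into the same configuration for `k + 1`. Starting at
`k = 0` from `(0^n, 0^m)`, after `n - 1` rounds the left cells hold the parities of `n - 1 - i`,
which is `(10)^{n/2}` because `n` is even, and the right cells hold the parity of `n - 1`, i.e. `1`.
-/

/-- A configuration of a Boolean automaton double-cycle with cycles of sizes `n`
and `m`: the shared automaton `c` is index 0 of both cycles (so valid
configurations satisfy `x.1 0 = x.2 0`). -/
abbrev Cfg (n m : ℕ) := (Fin n → Bool) × (Fin m → Bool)

/-- One asynchronous single-automaton update in a double-cycle whose shared
automaton `c` computes `fc`; every non-shared automaton copies its predecessor. -/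
inductive Step {n m : ℕ} (fc : Cfg n m → Bool) : Cfg n m → Cfg n m → Prop
  | left (x : Cfg n m) (i : Fin n) (hi : 1 ≤ i.val) :
      Step fc x (Function.update x.1 i (x.1 ⟨i.val - 1, by have := i.isLt; omega⟩), x.2)
  | right (x : Cfg n m) (j : Fin m) (hj : 1 ≤ j.val) :
      Step fc x (x.1, Function.update x.2 j (x.2 ⟨j.val - 1, by have := j.isLt; omega⟩))
  | center (x : Cfg n m) (i : Fin n) (j : Fin m) (hi : i.val = 0) (hj : j.val = 0) :
      Step fc x (Function.update x.1 i (fc x), Function.update x.2 j (fc x))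

/-- `Steps fc k x y`: configuration `y` is obtained from `x` by exactly `k`
asynchronous single-automaton updates. -/
def Steps {n m : ℕ} (fc : Cfg n m → Bool) : ℕ → Cfg n m → Cfg n m → Prop
  | 0, x, y => x = y
  | k + 1, x, y => ∃ z, Step fc x z ∧ Steps fc k z y

open Function

namespace Steps

variable {n m : ℕ} {fc : Cfg n m → Bool}

theorem trans {a b : ℕ} {x y z : Cfg n m} (hxy : Steps fc a x y) (hyz : Steps fc b y z) :
    Steps fc (a + b) x z := by
  induction a generalizing x with
  | zero => rw [Nat.zero_add]; exact (show x = y from hxy) ▸ hyz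
  | succ a ih =>
    obtain ⟨w, hxw, hwy⟩ := hxy
    rw [Nat.succ_add]
    exact ⟨w, hxw, ih hwy⟩

theorem single {x y : Cfg n m} (h : Step fc x y) : Steps fc 1 x y := ⟨y, h, rfl⟩

end Steps

def shiftUpTo {n : ℕ} (u : Fin n → Bool) (b : ℕ) : Fin n → Bool :=
  fun i => if 1 ≤ i.val ∧ i.val ≤ b then u ⟨i.val - 1, by omega⟩ else u i

def fillUpTo {m : ℕ} (v : Fin m → Bool) (j : ℕ) (c : Bool) : Fin m → Bool :=
  fun i => if i.val ≤ j then c else v i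

section Sweeps

variable {n m : ℕ} {fc : Cfg n m → Bool}

/-- Updating the left cells `b, b - 1, …, 1` in this order shifts the segment `[0, b]`. -/
theorem steps_shiftUpTo (x : Cfg n m) {b : ℕ} (hb : b < n) :
    Steps fc b x (shiftUpTo x.1 b, x.2) := by
  induction b generalizing x with
  | zero =>
    exact Prod.ext (funext fun i => (if_neg (show ¬(1 ≤ i.val ∧ i.val ≤ 0) by omega)).symm) rfl
  | succ b ih =>
    refine ⟨_, Step.left x ⟨b + 1, hb⟩ (by simp), ?_⟩
    convert ih _ (by omega) using 2
    funext ⟨i, hi⟩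
    simp only [shiftUpTo, update_apply, Fin.ext_iff]
    grind

/-- Updating the right cells `1, 2, …, j` in this order floods `[0, j]` with the centre value. -/
theorem steps_fillUpTo (x : Cfg n m) {c : Bool} (hc : ∀ i : Fin m, i.val = 0 → x.2 i = c)
    {j : ℕ} (hj : j < m) : Steps fc j x (x.1, fillUpTo x.2 j c) := by
  induction j with
  | zero =>
    show x = _
    ext i
    · rfl
    · by_cases hi : i.val = 0 <;> simp [fillUpTo, hi, hc]
  | succ j ih =>
    refine (ih (by omega)).trans (Steps.single ?_)
    convert Step.right (fc := fc) _ ⟨j + 1, hj⟩ (by simp) using 2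
    funext ⟨i, hi⟩
    simp only [fillUpTo, update_apply, Fin.ext_iff]
    grind

end Sweeps

/-- The configuration after `k` rounds; `k - i` truncates, so cells not yet reached hold `0`. -/
def roundCfg (n m k : ℕ) : Cfg n m :=
  (fun i => if i.val = n - 1 then false else Nat.bodd (k - i.val), fun _ => Nat.bodd k)

section Rounds

variable {n m : ℕ} (hn : 2 ≤ n) (hm : 0 < m) {fc : Cfg n m → Bool}
  (hfc : ∀ y : Cfg n m, fc y = (!(y.1 ⟨n - 1, by omega⟩) && !(y.2 ⟨m - 1, by omega⟩)))
include hn hm hfc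

theorem steps_roundCfg_succ (k : ℕ) :
    Steps fc (n + m - 2) (roundCfg n m k) (roundCfg n m (k + 1)) := by
  have hshift := steps_shiftUpTo (fc := fc) (roundCfg n m k) (b := n - 2) (by omega)
  set x : Cfg n m := (shiftUpTo (roundCfg n m k).1 (n - 2), (roundCfg n m k).2)
  have hlast : x.1 ⟨n - 1, by omega⟩ = false := by
    simp only [x, shiftUpTo]
    rw [if_neg (by omega)]
    simp [roundCfg]
  have hcentre : fc x = Nat.bodd (k + 1) := by
    rw [hfc, hlast]
    simp [x, roundCfg, Nat.bodd_succ]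
  set y : Cfg n m := (update x.1 ⟨0, by omega⟩ (fc x), update x.2 ⟨0, hm⟩ (fc x))
  have hfill := steps_fillUpTo (fc := fc) y (c := Nat.bodd (k + 1))
    (fun i hi => by simp [y, update_apply, Fin.ext_iff, hi, hcentre]) (j := m - 1) (by omega)
  have hround := (hshift.trans (Steps.single (Step.center x ⟨0, by omega⟩ ⟨0, hm⟩ rfl rfl))).trans
    hfill
  convert hround using 1
  · omega
  · ext ⟨i, hi⟩
    · simp only [roundCfg, y, update_apply, hcentre]
      simp only [x, roundCfg, shiftUpTo, Fin.ext_iff]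
      grind
    · simp only [roundCfg, y, fillUpTo, update_apply, hcentre]
      grind

theorem steps_roundCfg (t : ℕ) :
    Steps fc (t * (n + m - 2)) (roundCfg n m 0) (roundCfg n m t) := by
  induction t with
  | zero => rw [Nat.zero_mul]; rfl
  | succ t ih => rw [Nat.succ_mul]; exact ih.trans (steps_roundCfg_succ hn hm hfc t)

end Rounds

theorem roundCfg_zero (n m : ℕ) : roundCfg n m 0 = (fun _ => false, fun _ => false) := by
  ext i <;> simp [roundCfg]

theorem roundCfg_pred_of_even {n : ℕ} (m : ℕ) (hn : 0 < n) (hne : n % 2 = 0) :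
    roundCfg n m (n - 1) = (fun i => decide (i.val % 2 = 0), fun _ => true) := by
  have hbodd (k : ℕ) : Nat.bodd k = decide (k % 2 = 1) := by
    cases h : Nat.bodd k <;> simp [Nat.mod_two_of_bodd, h]
  ext ⟨i, hi⟩
  · simp only [roundCfg, hbodd]
    split_ifs <;> simp <;> omega
  · simp [roundCfg, hbodd]
    omega

/-- In a canonical negative double-cycle with both cycle sizes even, the
configuration ((10)^{n/2}, 1^m) is reachable from (0^n, 0^m) in at most
(n-1)(n+m-2) asynchronous updates (sequence `comp1`). -/
theorem stmt11 (n m : ℕ) (hn : 2 ≤ n) (hm : 2 ≤ m)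
    (hne : n % 2 = 0) :
    ∃ k ≤ (n - 1) * (n + m - 2),
      Steps (fun y : Cfg n m => !(y.1 ⟨n - 1, by omega⟩) && !(y.2 ⟨m - 1, by omega⟩))
        k ((fun _ => false, fun _ => false) : Cfg n m)
        ((fun i => decide (i.val % 2 = 0), fun _ => true) : Cfg n m) := by
  refine ⟨(n - 1) * (n + m - 2), le_rfl, ?_⟩
  rw [← roundCfg_zero, ← roundCfg_pred_of_even m (by omega) hne]
  exact steps_roundCfg hn (by omega) (fun _ => rfl) (n - 1)
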